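/- arXiv:0805.2231 — 2 statements merged into one kernel-verified Lean document; each statement's English description precedes it below -/
import Mathlib

section
/- Let u : ℝ≥0 → ℝ be bounded and continuous. Then for every compact interval J ⊆ [0,∞), the Poisson-weighted sums e^{-λt} ∑_{k≥0} u(k/λ) (λt)^k / k! converge to u(t) uniformly for t in J as λ → ∞. -/
open Filter Real Set Topology
open scoped Nat

/-!
Under the Poisson weights `e^{-λt} (λt)^k / k!` the node `k / λ` has mean `t` and variance `t / λ`.
Split `u (k / λ) - u t` according to whether `|k / λ - t| < δ`: near `t` it is small by uniform
continuity on a compact neighbourhood of `[a, b]`, and far from `t` it is at most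
`2 C ≤ 2 C (k / λ - t)² / δ²`, whose Poisson average `2 C t / (δ² λ)` tends to `0` uniformly on `[a, b]`
(a Chebyshev estimate).
-/

noncomputable def poissonWeight (x : ℝ) (k : ℕ) : ℝ := exp (-x) * x ^ k / k !

noncomputable def poissonSmoothing (u : ℝ → ℝ) (lam t : ℝ) : ℝ :=
  ∑' k : ℕ, u (k / lam) * poissonWeight (lam * t) k

lemma poissonWeight_nonneg {x : ℝ} (hx : 0 ≤ x) (k : ℕ) : 0 ≤ poissonWeight x k := by
  unfold poissonWeight
  positivity

section PoissonWeight

variable (x : ℝ)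

lemma hasSum_poissonWeight : HasSum (poissonWeight x) 1 := by
  have h := (NormedSpace.expSeries_div_hasSum_exp x).mul_left (exp (-x))
  rw [← Real.exp_eq_exp_ℝ, ← Real.exp_add, neg_add_cancel, Real.exp_zero] at h
  have hweight : poissonWeight x = fun k => exp (-x) * (x ^ k / k !) :=
    funext fun k => mul_div_assoc _ _ _
  rw [hweight]
  exact h

lemma hasSum_descFactorial_mul_poissonWeight (j : ℕ) :
    HasSum (fun k : ℕ => (k.descFactorial j : ℝ) * poissonWeight x k) (x ^ j) := by
  have hshift (n : ℕ) :
      ((n + j).descFactorial j : ℝ) * poissonWeight x (n + j) = x ^ j * poissonWeight x n := by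
    have h := Nat.factorial_mul_descFactorial (Nat.le_add_left j n)
    rw [Nat.add_sub_cancel] at h
    simp only [poissonWeight, ← h, Nat.cast_mul, pow_add]
    field_simp
  have hlow : ∑ i ∈ Finset.range j, (i.descFactorial j : ℝ) * poissonWeight x i = 0 :=
    Finset.sum_eq_zero fun i hi => by
      rw [Nat.descFactorial_eq_zero_iff_lt.mpr (Finset.mem_range.mp hi), Nat.cast_zero, zero_mul]
  rw [← add_zero (x ^ j), ← hlow, ← hasSum_nat_add_iff]
  simpa only [hshift, mul_one] using (hasSum_poissonWeight x).mul_left (x ^ j)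

lemma hasSum_sq_sub_mul_poissonWeight :
    HasSum (fun k : ℕ => ((k : ℝ) - x) ^ 2 * poissonWeight x k) x := by
  have h := ((hasSum_descFactorial_mul_poissonWeight x 2).add
    ((hasSum_descFactorial_mul_poissonWeight x 1).mul_left (1 - 2 * x))).add
    ((hasSum_poissonWeight x).mul_left (x ^ 2))
  convert h using 1
  · funext k
    rw [Nat.cast_descFactorial_two, Nat.descFactorial_one]
    ring
  · ring

lemma hasSum_sq_div_sub_mul_poissonWeight {lam : ℝ} (hlam : lam ≠ 0) (t : ℝ) :
    HasSum (fun k : ℕ => ((k : ℝ) / lam - t) ^ 2 * poissonWeight (lam * t) k) (t / lam) := by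
  have hscale : (fun k : ℕ => ((k : ℝ) / lam - t) ^ 2 * poissonWeight (lam * t) k) =
      fun k : ℕ => ((k : ℝ) - lam * t) ^ 2 * poissonWeight (lam * t) k / lam ^ 2 := by
    funext k
    field_simp
  rw [hscale, show t / lam = lam * t / lam ^ 2 by field_simp]
  exact (hasSum_sq_sub_mul_poissonWeight (lam * t)).div_const (lam ^ 2)

end PoissonWeight

lemma abs_tsum_mul_le_of_abs_le {w q g : ℕ → ℝ} {ε c v : ℝ} (hw : ∀ k, 0 ≤ w k)
    (hw1 : HasSum w 1) (hq : HasSum (fun k => q k * w k) v) (hg : ∀ k, |g k| ≤ ε + c * q k) :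
    |∑' k, g k * w k| ≤ ε + c * v := by
  have hbound : HasSum (fun k => (ε + c * q k) * w k) (ε + c * v) := by
    simpa only [add_mul, mul_assoc, mul_one] using (hw1.mul_left ε).add (hq.mul_left c)
  refine tsum_of_norm_bounded (f := fun k => g k * w k) hbound fun k => ?_
  rw [Real.norm_eq_abs, abs_mul, abs_of_nonneg (hw k)]
  exact mul_le_mul_of_nonneg_right (hg k) (hw k)

lemma abs_sub_le_add_mul_sq {u : ℝ → ℝ} {C ε δ y t : ℝ} (hδ : 0 < δ) (hε : 0 ≤ ε)
    (hy : |u y| ≤ C) (ht : |u t| ≤ C) (hnear : |y - t| < δ → |u y - u t| ≤ ε) :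
    |u y - u t| ≤ ε + 2 * C / δ ^ 2 * (y - t) ^ 2 := by
  have hC : 0 ≤ C := (abs_nonneg _).trans hy
  rcases lt_or_ge |y - t| δ with hlt | hge
  · have : 0 ≤ 2 * C / δ ^ 2 * (y - t) ^ 2 := by positivity
    linarith [hnear hlt]
  · have hsq : δ ^ 2 ≤ (y - t) ^ 2 := by
      rw [← sq_abs (y - t)]
      exact pow_le_pow_left₀ hδ.le hge 2
    have hfar : 2 * C ≤ 2 * C / δ ^ 2 * (y - t) ^ 2 := by
      rw [div_mul_eq_mul_div, le_div_iff₀ (by positivity)]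
      exact mul_le_mul_of_nonneg_left hsq (by positivity)
    linarith [abs_sub (u y) (u t)]

theorem abs_poissonSmoothing_sub_le {u : ℝ → ℝ} {C ε δ lam t : ℝ}
    (hC : ∀ y, 0 ≤ y → |u y| ≤ C) (hδ : 0 < δ) (hε : 0 ≤ ε) (hlam : 0 < lam) (ht : 0 ≤ t)
    (hnear : ∀ y, 0 ≤ y → |y - t| < δ → |u y - u t| ≤ ε) :
    |poissonSmoothing u lam t - u t| ≤ ε + 2 * C / δ ^ 2 * (t / lam) := by
  have hw := poissonWeight_nonneg (mul_nonneg hlam.le ht)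
  have hw1 := hasSum_poissonWeight (lam * t)
  have hk (k : ℕ) : 0 ≤ (k : ℝ) / lam := by positivity
  have hsum : Summable fun k : ℕ => u (k / lam) * poissonWeight (lam * t) k :=
    .of_norm_bounded (hw1.summable.mul_left C) fun k => by
      rw [Real.norm_eq_abs, abs_mul, abs_of_nonneg (hw k)]
      exact mul_le_mul_of_nonneg_right (hC _ (hk k)) (hw k)
  have hdiff : poissonSmoothing u lam t - u t =
      ∑' k : ℕ, (u (k / lam) - u t) * poissonWeight (lam * t) k := by
    simp only [poissonSmoothing, sub_mul]
    rw [hsum.tsum_sub (hw1.summable.mul_left _), tsum_mul_left, hw1.tsum_eq, mul_one]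
  rw [hdiff]
  exact abs_tsum_mul_le_of_abs_le hw hw1 (hasSum_sq_div_sub_mul_poissonWeight hlam.ne' t)
    fun k => abs_sub_le_add_mul_sq hδ hε (hC _ (hk k)) (hC t ht) (hnear _ (hk k))

lemma exists_pos_abs_sub_le_of_continuousOn_Ici {u : ℝ → ℝ} (hu : ContinuousOn u (Ici 0))
    (b : ℝ) {ε : ℝ} (hε : 0 < ε) :
    ∃ δ > 0, ∀ t ∈ Icc 0 b, ∀ y, 0 ≤ y → |y - t| < δ → |u y - u t| ≤ ε := by
  have huc : UniformContinuousOn u (Icc 0 (b + 1)) :=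
    isCompact_Icc.uniformContinuousOn_of_continuous (hu.mono fun _ hz => hz.1)
  obtain ⟨δ, hδ, hclose⟩ := Metric.uniformContinuousOn_iff.mp huc ε hε
  refine ⟨min δ 1, by positivity, fun t ht y hy hyt => ?_⟩
  have hyt₁ : y - t < 1 := (abs_lt.mp hyt).2.trans_le (min_le_right _ _)
  refine (hclose y ⟨hy, by linarith [ht.2]⟩ t ⟨ht.1, by linarith [ht.2]⟩ ?_).le
  exact (Real.dist_eq y t).trans_lt (hyt.trans_le (min_le_left _ _))

/-- Hille/Feller theorem on Poisson smoothing: for a bounded continuous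
`u : [0,∞) → ℝ`, the Poisson-weighted sums converge to `u` uniformly on
any compact interval `[a,b] ⊆ [0,∞)` as `λ → ∞`. -/
theorem stmt_0 (u : ℝ → ℝ) (hbdd : ∃ C : ℝ, ∀ t : ℝ, 0 ≤ t → |u t| ≤ C)
    (hcont : ContinuousOn u (Set.Ici 0)) (a b : ℝ) (ha : 0 ≤ a) :
    TendstoUniformlyOn
      (fun (lam : ℝ) (t : ℝ) =>
        ∑' k : ℕ, u ((k : ℝ) / lam) * (Real.exp (-(lam * t)) * (lam * t) ^ k / (Nat.factorial k : ℝ)))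
      u Filter.atTop (Set.Icc a b) := by
  change TendstoUniformlyOn (poissonSmoothing u) u atTop (Icc a b)
  obtain ⟨C, hC⟩ := hbdd
  rw [Metric.tendstoUniformlyOn_iff]
  intro ε hε
  obtain ⟨δ, hδ, hnear⟩ := exists_pos_abs_sub_le_of_continuousOn_Ici hcont b (half_pos hε)
  have hlim : Tendsto (fun lam : ℝ => 2 * C / δ ^ 2 * (b / lam)) atTop (𝓝 0) := by
    simpa only [mul_zero, id] using
      ((tendsto_const_nhds (x := b)).div_atTop tendsto_id).const_mul (2 * C / δ ^ 2)
  filter_upwards [eventually_gt_atTop 0, hlim.eventually_lt_const (half_pos hε)]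
    with lam hlam hsmall t ht
  have ht₀ : 0 ≤ t := ha.trans ht.1
  have hC₀ : 0 ≤ C := (abs_nonneg _).trans (hC 0 le_rfl)
  have hbound := abs_poissonSmoothing_sub_le hC hδ (half_pos hε).le hlam ht₀ (hnear t ⟨ht₀, ht.2⟩)
  have htb : 2 * C / δ ^ 2 * (t / lam) ≤ 2 * C / δ ^ 2 * (b / lam) := by
    gcongr
    exact ht.2
  rw [Real.dist_eq, abs_sub_comm]
  linarith
end

section
/- Let T be a nonnegative integrable random variable with survival function S, and fix t ≥ 0 with S(t) > 0. Then the variance of the random variable ((T−t)·1{T>t} − m(t)·1{T>t})/S(t), where m(t) = ∫_t^∞ S(u)du / S(t), equals Var(T − t | T > t)/S(t). -/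
/-!
With `A = {T > t}` and `Z = T - t`, the layer-cake formula gives
`∫_A Z = ∫_t^∞ S(u) du = m S(t)`, so the variable is `1_A (Z - m) / S(t)`, which has mean zero.
Its variance is therefore its second moment `∫_A (Z - m)² / S(t)² = (∫_A Z² - m² S(t)) / S(t)²`.
-/

open MeasureTheory ProbabilityTheory Real Set

theorem setIntegral_Ioi_comp_add_right (f : ℝ → ℝ) (t : ℝ) :
    ∫ u in Ioi 0, f (u + t) = ∫ u in Ioi t, f u := by
  have hpre : (· + t) ⁻¹' Ioi t = Ioi (0 : ℝ) := by ext; simp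
  rw [← hpre]
  exact (measurePreserving_add_right volume t).setIntegral_preimage_emb
    (measurableEmbedding_addRight t) f (Ioi t)

section

variable {Ω : Type*} [MeasurableSpace Ω] {μ : Measure Ω} {X : Ω → ℝ}

theorem setIntegral_sub_eq_integral_Ioi_measureReal_lt [IsFiniteMeasure μ]
    (hXm : Measurable X) (hX : Integrable X μ) (t : ℝ) :
    ∫ ω in {ω | t < X ω}, (X ω - t) ∂μ = ∫ u in Ioi t, μ.real {ω | u < X ω} := by
  set A := {ω | t < X ω}
  have hA : MeasurableSet A := measurableSet_lt measurable_const hXm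
  have hexcess_nonneg : 0 ≤ A.indicator (fun ω => X ω - t) :=
    indicator_nonneg fun ω (hω : t < X ω) => (sub_pos.2 hω).le
  have hsuperlevel :
      ∀ u > 0, {ω | u < A.indicator (fun ω => X ω - t) ω} = {ω | u + t < X ω} := by
    intro u hu
    ext ω
    by_cases hω : t < X ω
    · simp [A, hω, lt_sub_iff_add_lt]
    · have hω' : ω ∉ A := hω
      simp only [mem_ofPred_eq, indicator_of_notMem hω', hu.not_gt, false_iff]
      linarith
  have hexcess_int : Integrable (A.indicator fun ω => X ω - t) μ :=
    (hX.sub (integrable_const t)).indicator hA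
  rw [← integral_indicator hA,
    hexcess_int.integral_eq_integral_meas_lt (Filter.Eventually.of_forall hexcess_nonneg),
    ← setIntegral_Ioi_comp_add_right (fun u => μ.real {ω | u < X ω}) t]
  exact setIntegral_congr_fun measurableSet_Ioi fun u hu => by rw [hsuperlevel u hu]

variable {A : Set Ω} {Z : Ω → ℝ} {m : ℝ}

theorem setIntegral_sub_sq_eq_of_setIntegral_eq [IsFiniteMeasure μ] (hZ : MemLp Z 2 μ)
    (hm : ∫ ω in A, Z ω ∂μ = m * μ.real A) :
    ∫ ω in A, (Z ω - m) ^ 2 ∂μ = ∫ ω in A, Z ω ^ 2 ∂μ - m ^ 2 * μ.real A := by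
  have hZ1 : IntegrableOn Z A μ := (hZ.integrable one_le_two).integrableOn
  have hZ2 : IntegrableOn (fun ω => Z ω ^ 2) A μ := hZ.integrable_sq.integrableOn
  have hexpand : (fun ω => (Z ω - m) ^ 2) = fun ω => Z ω ^ 2 - 2 * m * Z ω + m ^ 2 := by
    funext ω
    ring
  have hlin : IntegrableOn (fun ω => Z ω ^ 2 - 2 * m * Z ω) A μ := hZ2.sub (hZ1.const_mul _)
  rw [hexpand, integral_add hlin (integrable_const _), integral_sub hZ2 (hZ1.const_mul _),
    integral_const_mul, hm, setIntegral_const, smul_eq_mul]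
  ring

theorem variance_indicator_sub_div_measureReal [IsProbabilityMeasure μ] (hA : MeasurableSet A)
    (hZ : MemLp Z 2 μ) (hm : ∫ ω in A, Z ω ∂μ = m * μ.real A) :
    Var[fun ω => A.indicator (fun ω => Z ω - m) ω / μ.real A; μ]
      = ((∫ ω in A, Z ω ^ 2 ∂μ) / μ.real A - m ^ 2) / μ.real A := by
  have hZ1 : Integrable Z μ := hZ.integrable one_le_two
  have hmean : ∫ ω, A.indicator (fun ω => Z ω - m) ω / μ.real A ∂μ = 0 := by
    rw [integral_div, integral_indicator hA, integral_sub hZ1.integrableOn (integrable_const _),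
      hm, setIntegral_const, smul_eq_mul, mul_comm, sub_self, zero_div]
  rw [variance_of_integral_eq_zero (by fun_prop) hmean]
  have hsq : ∀ ω, (A.indicator (fun ω => Z ω - m) ω / μ.real A) ^ 2
      = A.indicator (fun ω => (Z ω - m) ^ 2) ω / μ.real A ^ 2 := by
    intro ω
    by_cases hω : ω ∈ A <;> simp [hω, div_pow]
  simp_rw [hsq]
  rw [integral_div, integral_indicator hA, setIntegral_sub_sq_eq_of_setIntegral_eq hZ hm]
  rcases eq_or_ne (μ.real A) 0 with h | h
  · simp [h]
  · field_simp

end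

theorem stmt_7_general {Ω : Type*} [MeasureTheory.MeasureSpace Ω]
    [MeasureTheory.IsProbabilityMeasure (ℙ : MeasureTheory.Measure Ω)]
    (T : Ω → ℝ) (hTm : Measurable T)
    (hTint : MeasureTheory.Integrable T)
    (hTsq : MeasureTheory.Integrable (fun ω => (T ω) ^ 2))
    (S : ℝ → ℝ) (hS : ∀ s : ℝ, S s = (ℙ {ω | s < T ω}).toReal)
    (t : ℝ) (hSt : 0 < S t)
    (m : ℝ) (hm : m = (∫ u in Set.Ioi t, S u) / S t) :
    ProbabilityTheory.variance
      (fun ω => ((T ω - t) * Set.indicator {ω | t < T ω} (fun _ => (1 : ℝ)) ω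
          - m * Set.indicator {ω | t < T ω} (fun _ => (1 : ℝ)) ω) / S t) ℙ
      = ((∫ ω in {ω | t < T ω}, (T ω - t) ^ 2) / S t - m ^ 2) / S t := by
  obtain rfl : S = fun s => (ℙ : Measure Ω).real {ω | s < T ω} := funext hS
  beta_reduce at hSt hm
  set A := {ω | t < T ω}
  have hA : MeasurableSet A := measurableSet_lt measurable_const hTm
  have hexcess : MemLp (fun ω => T ω - t) 2 :=
    ((memLp_two_iff_integrable_sq hTm.aestronglyMeasurable).2 hTsq).sub (memLp_const t)
  have hmean : ∫ ω in A, (T ω - t) = m * (ℙ : Measure Ω).real A := by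
    rw [setIntegral_sub_eq_integral_Ioi_measureReal_lt hTm hTint, hm]
    field_simp [hSt.ne']
  have hX : (fun ω => ((T ω - t) * A.indicator (fun _ => (1 : ℝ)) ω
      - m * A.indicator (fun _ => (1 : ℝ)) ω) / (ℙ : Measure Ω).real A)
      = fun ω => A.indicator (fun ω => T ω - t - m) ω / (ℙ : Measure Ω).real A := by
    funext ω
    by_cases hω : ω ∈ A <;> simp [hω]
  rw [hX, variance_indicator_sub_div_measureReal hA hexcess hmean]

/-- Variance computation of Remark 3.1: the variance of
`((T−t)·1{T>t} − m(t)·1{T>t})/S(t)` equals `Var(T−t | T>t)/S(t)`,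
where `m(t) = ∫_t^∞ S(u)du / S(t)` and
`Var(T−t | T>t) = E((T−t)² | T>t) − m(t)²`. -/
theorem stmt_7 {Ω : Type*} [MeasureTheory.MeasureSpace Ω]
    [MeasureTheory.IsProbabilityMeasure (ℙ : MeasureTheory.Measure Ω)]
    (T : Ω → ℝ) (hTm : Measurable T) (hT0 : ∀ ω, 0 ≤ T ω)
    (hTint : MeasureTheory.Integrable T)
    (hTsq : MeasureTheory.Integrable (fun ω => (T ω) ^ 2))
    (S : ℝ → ℝ) (hS : ∀ s : ℝ, S s = (ℙ {ω | s < T ω}).toReal)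
    (t : ℝ) (ht : 0 ≤ t) (hSt : 0 < S t)
    (m : ℝ) (hm : m = (∫ u in Set.Ioi t, S u) / S t) :
    ProbabilityTheory.variance
      (fun ω => ((T ω - t) * Set.indicator {ω | t < T ω} (fun _ => (1 : ℝ)) ω
          - m * Set.indicator {ω | t < T ω} (fun _ => (1 : ℝ)) ω) / S t) ℙ
      = ((∫ ω in {ω | t < T ω}, (T ω - t) ^ 2) / S t - m ^ 2) / S t :=
  stmt_7_general T hTm hTint hTsq S hS t hSt m hm
end
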